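/- arXiv:2107.10510 — 3 statements merged into one kernel-verified Lean document; each statement's English description precedes it below -/
import Mathlib

section
/- Transition (cocycle) formula for the path-integral value: for the canonical Markov chain on a connected weighted graph, any edge flow f, and any three states S, T, U, one has V_f^U(T) − V_f^U(S) = V_f^S(T). -/
open Finset

variable {Ξ : Type*}

/-- Transition probability of the canonical Markov chain associated to the
edge weight `lam`: `p(S,T) = λ(S,T) / Σ_U λ(S,U)`. -/
noncomputable def transProb [Fintype Ξ] (lam : Ξ → Ξ → ℝ) (S T : Ξ) : ℝ :=
  lam S T / ∑ U : Ξ, lam S U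

/-- Probability of a finite path `x : Fin (n+1) → Ξ` under the canonical chain. -/
noncomputable def pathProb [Fintype Ξ] (lam : Ξ → Ξ → ℝ) {n : ℕ}
    (x : Fin (n + 1) → Ξ) : ℝ :=
  ∏ k : Fin n, transProb lam (x k.castSucc) (x k.succ)

/-- The path integral of an edge flow `f` along a finite path. -/
def pathSum (f : Ξ → Ξ → ℝ) {n : ℕ} (x : Fin (n + 1) → Ξ) : ℝ :=
  ∑ k : Fin n, f (x k.castSucc) (x k.succ)

/-- A path of length `n` from `S` which hits `T` for the first time at time `n`. -/
def FirstHit [DecidableEq Ξ] (S T : Ξ) {n : ℕ} (x : Fin (n + 1) → Ξ) : Prop :=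
  x 0 = S ∧ x (Fin.last n) = T ∧ ∀ k : Fin n, x k.castSucc ≠ T

instance [DecidableEq Ξ] (S T : Ξ) (n : ℕ) :
    DecidablePred (FirstHit S T (n := n)) := fun _ => by
  unfold FirstHit; infer_instance

/-- The value `V_f^S(T)`: the expected path integral of the edge flow `f` along
the canonical Markov chain started at `S`, up to the first hitting time of `T`,
written as a sum over all finite paths first hitting `T` weighted by their
probabilities. -/
noncomputable def pathValue [Fintype Ξ] [DecidableEq Ξ]
    (lam : Ξ → Ξ → ℝ) (f : Ξ → Ξ → ℝ) (S T : Ξ) : ℝ :=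
  ∑' n : ℕ, ∑ x ∈ Finset.univ.filter (FirstHit S T (n := n)),
      pathProb lam x * pathSum f x

/-! Fix the target `T` and write `V X = V_f^X(T)`. First-step analysis gives
`V X = ∑ a, p(X,a) (f(X,a) + V a)` for every `X`: for `X ≠ T` by the Markov property, and at
`X = T` because the right-hand side is then the expected integral of `f` over an excursion from
`T` back to `T`, which vanishes since reversing an excursion preserves its probability (`λ` is
symmetric) and negates its integral (`f` is antisymmetric). Subtracting these equations for the
targets `T` and `S`, the function `X ↦ V_f^X(T) - V_f^X(S)` is harmonic, hence constant on the
connected graph by the maximum principle; its value at `X = S` is `V_f^S(T)`. The series defining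
`V` converge because the hitting time of `T` has a geometric tail. -/

open Filter Topology

lemma prod_succ_eq_prod_castSucc_of_loop {α M : Type*} [CommMonoid M] {n : ℕ}
    (g : α → M) (x : Fin (n + 1) → α) (hx : x 0 = x (Fin.last n)) :
    ∏ k : Fin n, g (x k.succ) = ∏ k : Fin n, g (x k.castSucc) := by
  rw [← Equiv.prod_comp (finRotate n) (fun k => g (x k.castSucc))]
  refine Finset.prod_congr rfl fun k _ => ?_
  cases n with
  | zero => exact k.elim0
  | succ m =>
    induction k using Fin.lastCases with
    | last => simp [hx, Fin.succ_last]
    | cast i => simp [Fin.coeSucc_eq_succ]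

lemma sum_filter_cons_eq {α M : Type*} [Fintype α] [DecidableEq α] [AddCommMonoid M] {n : ℕ}
    (P : (Fin (n + 2) → α) → Prop) [DecidablePred P]
    (Q : α → (Fin (n + 1) → α) → Prop) [∀ a, DecidablePred (Q a)] (S : α)
    (hQ : ∀ a y, Q a y → y 0 = a) (hP : ∀ a y, P (Fin.cons a y) ↔ a = S ∧ Q (y 0) y)
    (g : (Fin (n + 2) → α) → M) :
    ∑ x ∈ univ.filter P, g x = ∑ a, ∑ y ∈ univ.filter (Q a), g (Fin.cons S y) := by
  have hfiber : ∀ a, (univ.filter fun y => Q (y 0) y).filter (fun y => y 0 = a)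
      = univ.filter (Q a) := fun a => by
    ext y
    simp only [mem_filter, mem_univ, true_and]
    exact ⟨fun ⟨hy, h0⟩ => h0 ▸ hy, fun hy => ⟨(hQ a y hy).symm ▸ hy, hQ a y hy⟩⟩
  simp_rw [← hfiber]
  rw [sum_fiberwise]
  refine sum_nbij' Fin.tail (fun y => (Fin.cons S y : Fin (n + 2) → α)) (fun x hx => ?_)
    (fun y hy => ?_) (fun x hx => ?_) (fun y _ => by simp) (fun x hx => ?_)
  · rw [mem_filter, ← Fin.cons_self_tail x, hP] at hx
    exact mem_filter.2 ⟨mem_univ _, hx.2.2⟩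
  · exact mem_filter.2 ⟨mem_univ _, (hP S y).2 ⟨rfl, (mem_filter.1 hy).2⟩⟩
  · rw [mem_filter, ← Fin.cons_self_tail x, hP] at hx
    conv_rhs => rw [← Fin.cons_self_tail x, hx.2.1]
  · rw [mem_filter, ← Fin.cons_self_tail x, hP] at hx
    conv_lhs => rw [← Fin.cons_self_tail x, hx.2.1]

section Paths

lemma pathSum_cons (f : Ξ → Ξ → ℝ) {n : ℕ} (a : Ξ) (y : Fin (n + 1) → Ξ) :
    pathSum f (Fin.cons a y : Fin (n + 2) → Ξ) = f a (y 0) + pathSum f y := by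
  simp [pathSum, Fin.sum_univ_succ]

lemma pathSum_comp_rev (f : Ξ → Ξ → ℝ) {n : ℕ} (x : Fin (n + 1) → Ξ) :
    pathSum f (x ∘ Fin.rev) = ∑ k : Fin n, f (x k.succ) (x k.castSucc) := by
  rw [pathSum, ← Equiv.sum_comp Fin.revPerm]
  simp [Fin.rev_castSucc, Fin.rev_succ]

lemma pathSum_comp_rev_of_antisymm {f : Ξ → Ξ → ℝ} (hf : ∀ a b, f b a = -f a b) {n : ℕ}
    (x : Fin (n + 1) → Ξ) : pathSum f (x ∘ Fin.rev) = -pathSum f x := by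
  rw [pathSum_comp_rev, pathSum, ← sum_neg_distrib]
  simp only [hf (x (Fin.castSucc _))]

variable [Fintype Ξ] (lam : Ξ → Ξ → ℝ)

lemma pathProb_cons {n : ℕ} (a : Ξ) (y : Fin (n + 1) → Ξ) :
    pathProb lam (Fin.cons a y : Fin (n + 2) → Ξ) = transProb lam a (y 0) * pathProb lam y := by
  simp [pathProb, Fin.prod_univ_succ]

lemma transProb_nonneg (hnonneg : ∀ a b, 0 ≤ lam a b) (a b : Ξ) : 0 ≤ transProb lam a b :=
  div_nonneg (hnonneg a b) (sum_nonneg fun c _ => hnonneg a c)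

lemma sum_transProb_eq_one {a : Ξ} (ha : ∑ b, lam a b ≠ 0) : ∑ b, transProb lam a b = 1 := by
  simp only [transProb]
  rw [← sum_div, div_self ha]

lemma pathProb_nonneg (hnonneg : ∀ a b, 0 ≤ lam a b) {n : ℕ} (x : Fin (n + 1) → Ξ) :
    0 ≤ pathProb lam x :=
  prod_nonneg fun _ _ => transProb_nonneg lam hnonneg _ _

lemma pathProb_of_length_zero (x : Fin 1 → Ξ) : pathProb lam x = 1 :=
  prod_of_isEmpty _

lemma pathProb_comp_rev {n : ℕ} (x : Fin (n + 1) → Ξ) :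
    pathProb lam (x ∘ Fin.rev) = ∏ k : Fin n, transProb lam (x k.succ) (x k.castSucc) := by
  rw [pathProb, ← Equiv.prod_comp Fin.revPerm]
  simp [Fin.rev_castSucc, Fin.rev_succ]

lemma pathProb_comp_rev_of_loop (hsymm : ∀ a b, lam a b = lam b a) {n : ℕ}
    (x : Fin (n + 1) → Ξ) (hx : x 0 = x (Fin.last n)) :
    pathProb lam (x ∘ Fin.rev) = pathProb lam x := by
  rw [pathProb_comp_rev, pathProb]
  simp only [transProb, prod_div_distrib]
  rw [prod_succ_eq_prod_castSucc_of_loop (fun a => ∑ U, lam a U) x hx]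
  simp only [hsymm (x (Fin.succ _))]

end Paths

section Hitting

def IsExcursion (T : Ξ) {n : ℕ} (x : Fin (n + 1) → Ξ) : Prop :=
  x 0 = T ∧ x (Fin.last n) = T ∧ ∀ m, x m = T → m = 0 ∨ m = Fin.last n

instance [DecidableEq Ξ] (T : Ξ) (n : ℕ) : DecidablePred (IsExcursion T (n := n)) := fun _ => by
  unfold IsExcursion; infer_instance

lemma IsExcursion.comp_rev {T : Ξ} {n : ℕ} {x : Fin (n + 1) → Ξ} (h : IsExcursion T x) :
    IsExcursion T (x ∘ Fin.rev) := by
  obtain ⟨h0, hl, hm⟩ := h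
  refine ⟨by simpa using hl, by simpa using h0, fun m hm' => ?_⟩
  simpa [Fin.rev_eq_iff, or_comm] using hm _ hm'

variable [DecidableEq Ξ]

lemma firstHit_cons_iff {S T : Ξ} (hST : S ≠ T) {n : ℕ} (a : Ξ) (y : Fin (n + 1) → Ξ) :
    FirstHit S T (Fin.cons a y : Fin (n + 2) → Ξ) ↔ a = S ∧ FirstHit (y 0) T y := by
  simp only [FirstHit, Fin.forall_fin_succ, Fin.cons_zero, ← Fin.succ_last, Fin.cons_succ,
    Fin.castSucc_zero, ← Fin.succ_castSucc, true_and]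
  constructor
  · rintro ⟨rfl, hl, -, hy⟩
    exact ⟨rfl, hl, hy⟩
  · rintro ⟨rfl, hl, hy⟩
    exact ⟨rfl, hl, hST, hy⟩

lemma not_firstHit_self (T : Ξ) {n : ℕ} (x : Fin (n + 2) → Ξ) : ¬FirstHit T T x :=
  fun h => h.2.2 0 h.1

lemma isExcursion_cons_iff (T : Ξ) {n : ℕ} (a : Ξ) (y : Fin (n + 1) → Ξ) :
    IsExcursion T (Fin.cons a y : Fin (n + 2) → Ξ) ↔ a = T ∧ FirstHit (y 0) T y := by
  unfold IsExcursion FirstHit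
  rw [Fin.forall_fin_succ, ← Fin.succ_last]
  simp only [Fin.cons_zero, Fin.cons_succ, Fin.succ_inj, Fin.succ_ne_zero, true_or, implies_true,
    false_or, true_and]
  rw [Fin.forall_fin_succ']
  simp [Fin.castSucc_ne_last]

variable [Fintype Ξ] (lam : Ξ → Ξ → ℝ) (f : Ξ → Ξ → ℝ) (T : Ξ)

lemma sum_isExcursion_pathProb_mul_pathSum (hsymm : ∀ a b, lam a b = lam b a)
    (hf : ∀ a b, f b a = -f a b) (n : ℕ) :
    ∑ x ∈ univ.filter (IsExcursion T (n := n)), pathProb lam x * pathSum f x = 0 := by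
  set E := ∑ x ∈ univ.filter (IsExcursion T (n := n)), pathProb lam x * pathSum f x
  have hrev : E = -E := by
    rw [← sum_neg_distrib]
    refine sum_nbij' (· ∘ Fin.rev) (· ∘ Fin.rev) (fun x hx => ?_) (fun x hx => ?_)
      (fun x _ => by simp [Function.comp_assoc, Fin.rev_involutive.comp_self])
      (fun x _ => by simp [Function.comp_assoc, Fin.rev_involutive.comp_self])
      (fun x hx => ?_)
    all_goals simp only [mem_filter, mem_univ, true_and] at hx ⊢
    · exact hx.comp_rev
    · exact hx.comp_rev
    · rw [pathProb_comp_rev_of_loop lam hsymm x (hx.1.trans hx.2.1.symm),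
        pathSum_comp_rev_of_antisymm hf, mul_neg, neg_neg]
  linarith

noncomputable def hitProb (n : ℕ) (S : Ξ) : ℝ :=
  ∑ x ∈ univ.filter (FirstHit S T (n := n)), pathProb lam x

noncomputable def hitValue (n : ℕ) (S : Ξ) : ℝ :=
  ∑ x ∈ univ.filter (FirstHit S T (n := n)), pathProb lam x * pathSum f x

noncomputable def survProb (n : ℕ) (S : Ξ) : ℝ :=
  ∑ x ∈ univ.filter (fun x : Fin (n + 1) → Ξ => x 0 = S ∧ ∀ m, x m ≠ T), pathProb lam x

lemma hitProb_zero (S : Ξ) : hitProb lam T 0 S = if S = T then 1 else 0 := by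
  split_ifs with hST
  · subst hST
    rw [hitProb, sum_eq_single_of_mem (fun _ => S) (by simp [FirstHit]),
      pathProb_of_length_zero]
    intro x hx hne
    exact absurd (funext (Fin.forall_fin_one.2 (mem_filter.1 hx).2.1)) hne
  · refine sum_eq_zero fun x hx => absurd ?_ hST
    obtain ⟨-, h0, hl, -⟩ := mem_filter.1 hx
    exact h0.symm.trans hl

lemma survProb_zero {S : Ξ} (hST : S ≠ T) : survProb lam T 0 S = 1 := by
  rw [survProb, sum_eq_single_of_mem (fun _ => S) (by simp [hST]), pathProb_of_length_zero]
  intro x hx hne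
  exact absurd (funext (Fin.forall_fin_one.2 (mem_filter.1 hx).2.1)) hne

lemma survProb_self (n : ℕ) : survProb lam T n T = 0 :=
  sum_eq_zero fun _ hx => absurd (mem_filter.1 hx).2.1 ((mem_filter.1 hx).2.2 0)

lemma hitProb_succ_self (n : ℕ) : hitProb lam T (n + 1) T = 0 :=
  sum_eq_zero fun x hx => absurd (mem_filter.1 hx).2 (not_firstHit_self T x)

lemma hitValue_zero (S : Ξ) : hitValue lam f T 0 S = 0 := by
  simp [hitValue, pathSum]

lemma hitValue_self (n : ℕ) : hitValue lam f T n T = 0 := by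
  cases n with
  | zero => exact hitValue_zero lam f T T
  | succ n => exact sum_eq_zero fun x hx => absurd (mem_filter.1 hx).2 (not_firstHit_self T x)

lemma pathValue_self : pathValue lam f T T = 0 :=
  (tsum_congr (hitValue_self lam f T)).trans tsum_zero

lemma hitProb_succ {S : Ξ} (hST : S ≠ T) (n : ℕ) :
    hitProb lam T (n + 1) S = ∑ a, transProb lam S a * hitProb lam T n a := by
  rw [hitProb, sum_filter_cons_eq _ (fun a => FirstHit a T) S (fun _ _ h => h.1)
    (firstHit_cons_iff hST)]
  refine sum_congr rfl fun a _ => ?_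
  rw [hitProb, mul_sum]
  refine sum_congr rfl fun y hy => ?_
  rw [pathProb_cons, (mem_filter.1 hy).2.1]

lemma survProb_succ {S : Ξ} (hST : S ≠ T) (n : ℕ) :
    survProb lam T (n + 1) S = ∑ a, transProb lam S a * survProb lam T n a := by
  rw [survProb, sum_filter_cons_eq _ (fun a y => y 0 = a ∧ ∀ m, y m ≠ T) S (fun _ _ h => h.1)]
  · refine sum_congr rfl fun a _ => ?_
    rw [survProb, mul_sum]
    refine sum_congr rfl fun y hy => ?_
    rw [pathProb_cons, (mem_filter.1 hy).2.1]
  · intro a y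
    simp only [Fin.forall_fin_succ, Fin.cons_zero, Fin.cons_succ, true_and]
    exact ⟨fun ⟨h, _, hy⟩ => ⟨h, hy⟩, fun ⟨h, hy⟩ => ⟨h, h ▸ hST, hy⟩⟩

lemma sum_firstHit_pathProb_cons_mul_pathSum_cons (S a : Ξ) (n : ℕ) :
    ∑ y ∈ univ.filter (FirstHit a T (n := n)),
        pathProb lam (Fin.cons S y : Fin (n + 2) → Ξ) * pathSum f (Fin.cons S y : Fin (n + 2) → Ξ)
      = transProb lam S a * (f S a * hitProb lam T n a + hitValue lam f T n a) := by
  rw [hitProb, hitValue, mul_sum, ← sum_add_distrib, mul_sum]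
  refine sum_congr rfl fun y hy => ?_
  rw [pathProb_cons, pathSum_cons, (mem_filter.1 hy).2.1]
  ring

lemma hitValue_succ (hsymm : ∀ a b, lam a b = lam b a) (hf : ∀ a b, f b a = -f a b)
    (S : Ξ) (n : ℕ) :
    hitValue lam f T (n + 1) S
      = ∑ a, transProb lam S a * (f S a * hitProb lam T n a + hitValue lam f T n a) := by
  simp_rw [← sum_firstHit_pathProb_cons_mul_pathSum_cons]
  rcases eq_or_ne S T with rfl | hST
  · rw [hitValue_self]
    exact (sum_isExcursion_pathProb_mul_pathSum lam f S hsymm hf (n + 1)).symm.trans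
      (sum_filter_cons_eq _ _ S (fun _ _ h => h.1) (isExcursion_cons_iff S) _)
  · exact sum_filter_cons_eq _ (fun a => FirstHit a T) S (fun _ _ h => h.1)
      (firstHit_cons_iff hST) _

end Hitting

lemma le_inv_mul_pow_of_antitone {u : ℕ → ℝ} (hu : Antitone u) {N : ℕ} (hN : 0 < N) {r : ℝ}
    (hr0 : 0 < r) (hr1 : r ≤ 1) (h : ∀ k, u (k * N) ≤ (r ^ N) ^ k) (n : ℕ) :
    u n ≤ (r ^ N)⁻¹ * r ^ n :=
  calc u n ≤ u (n / N * N) := hu (Nat.div_mul_le_self n N)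
    _ ≤ (r ^ N) ^ (n / N) := h _
    _ = (r ^ N)⁻¹ * r ^ (N * (n / N + 1)) := by
      rw [pow_mul, pow_succ', inv_mul_cancel_left₀ (by positivity)]
    _ ≤ (r ^ N)⁻¹ * r ^ n := mul_le_mul_of_nonneg_left
      (pow_le_pow_of_le_one hr0.le hr1 (Nat.lt_mul_div_succ n hN).le) (by positivity)

section Decay

variable [Fintype Ξ] [DecidableEq Ξ] {lam : Ξ → Ξ → ℝ} (T : Ξ)

lemma sum_range_hitProb_add_survProb (hpos : ∀ a, 0 < ∑ b, lam a b) (n : ℕ) (S : Ξ) :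
    ∑ m ∈ range (n + 1), hitProb lam T m S + survProb lam T n S = 1 := by
  induction n generalizing S with
  | zero =>
    rcases eq_or_ne S T with rfl | hST
    · simp [hitProb_zero, survProb_self]
    · simp [hitProb_zero, survProb_zero, hST]
  | succ n ih =>
    rcases eq_or_ne S T with rfl | hST
    · simp [sum_range_succ', hitProb_zero, hitProb_succ_self, survProb_self]
    · rw [sum_range_succ', hitProb_zero, if_neg hST, add_zero,
        sum_congr rfl fun m _ => hitProb_succ lam T hST m, sum_comm, survProb_succ lam T hST,
        ← sum_add_distrib]
      simp_rw [← mul_sum, ← mul_add, ih, mul_one]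
      exact sum_transProb_eq_one lam (hpos S).ne'

lemma hitProb_succ_add_survProb_succ (hpos : ∀ a, 0 < ∑ b, lam a b) (n : ℕ) (S : Ξ) :
    hitProb lam T (n + 1) S + survProb lam T (n + 1) S = survProb lam T n S := by
  have h := sum_range_hitProb_add_survProb T hpos (n + 1) S
  rw [sum_range_succ, ← sum_range_hitProb_add_survProb T hpos n S] at h
  linarith

variable (hnonneg : ∀ a b, 0 ≤ lam a b)
include hnonneg

lemma hitProb_nonneg (n : ℕ) (S : Ξ) : 0 ≤ hitProb lam T n S :=
  sum_nonneg fun x _ => pathProb_nonneg lam hnonneg x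

lemma survProb_nonneg (n : ℕ) (S : Ξ) : 0 ≤ survProb lam T n S :=
  sum_nonneg fun x _ => pathProb_nonneg lam hnonneg x

lemma survProb_add_le_mul {N : ℕ} {b : ℝ} (hb : ∀ a, survProb lam T N a ≤ b) (m : ℕ) (S : Ξ) :
    survProb lam T (m + N) S ≤ b * survProb lam T m S := by
  induction m generalizing S with
  | zero =>
    rcases eq_or_ne S T with rfl | hST
    · simp [survProb_self]
    · rw [zero_add, survProb_zero lam T hST, mul_one]
      exact hb S
  | succ m ih =>
    rcases eq_or_ne S T with rfl | hST
    · simp [survProb_self]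
    · rw [Nat.add_right_comm, survProb_succ lam T hST, survProb_succ lam T hST, mul_sum]
      refine sum_le_sum fun a _ => ?_
      rw [mul_left_comm]
      exact mul_le_mul_of_nonneg_left (ih a) (transProb_nonneg lam hnonneg S a)

variable (hpos : ∀ a, 0 < ∑ b, lam a b)
include hpos

lemma survProb_antitone (S : Ξ) : Antitone (survProb lam T · S) :=
  antitone_nat_of_succ_le fun n => by
    linarith [hitProb_succ_add_survProb_succ T hpos n S, hitProb_nonneg T hnonneg (n + 1) S]

lemma hitProb_succ_le_survProb (n : ℕ) (S : Ξ) : hitProb lam T (n + 1) S ≤ survProb lam T n S := by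
  linarith [hitProb_succ_add_survProb_succ T hpos n S, survProb_nonneg T hnonneg (n + 1) S]

lemma survProb_le_one (n : ℕ) (S : Ξ) : survProb lam T n S ≤ 1 := by
  have h := sum_range_hitProb_add_survProb T hpos 0 S
  rw [sum_range_one] at h
  linarith [survProb_antitone T hnonneg hpos S (Nat.zero_le n), hitProb_nonneg T hnonneg 0 S]

lemma exists_survProb_lt_one {S : Ξ} (hconn : Relation.ReflTransGen (fun x y => 0 < lam x y) S T) :
    ∃ n, survProb lam T n S < 1 := by
  induction hconn using Relation.ReflTransGen.head_induction_on with
  | refl => exact ⟨0, by rw [survProb_self]; exact one_pos⟩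
  | @head a c hac _ ih =>
    obtain ⟨n, hn⟩ := ih
    rcases eq_or_ne a T with rfl | haT
    · exact ⟨0, by rw [survProb_self]; exact one_pos⟩
    refine ⟨n + 1, ?_⟩
    rw [survProb_succ lam T haT, ← sum_transProb_eq_one lam (hpos a).ne']
    refine sum_lt_sum (fun x _ => ?_) ⟨c, mem_univ c, ?_⟩
    · exact mul_le_of_le_one_right (transProb_nonneg lam hnonneg a x)
        (survProb_le_one T hnonneg hpos n x)
    · exact mul_lt_of_lt_one_right (div_pos hac (hpos a)) hn
lemma exists_survProb_le_geometric
    (hconn : ∀ a, Relation.ReflTransGen (fun x y => 0 < lam x y) a T) :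
    ∃ C r : ℝ, 0 ≤ r ∧ r < 1 ∧ ∀ n S, survProb lam T n S ≤ C * r ^ n := by
  have : Nonempty Ξ := ⟨T⟩
  choose g hg using fun S => exists_survProb_lt_one T hnonneg hpos (hconn S)
  obtain ⟨S₀, hS₀⟩ := Finite.exists_max g
  set N := g S₀ + 1
  have hN : ∀ S, survProb lam T N S < 1 := fun S =>
    (survProb_antitone T hnonneg hpos S ((hS₀ S).trans (Nat.le_succ _))).trans_lt (hg S)
  obtain ⟨S₁, hS₁⟩ := Finite.exists_max (survProb lam T N)
  obtain ⟨b, hb, hb1⟩ := exists_between (hN S₁)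
  have hb0 : 0 < b := (survProb_nonneg T hnonneg N S₁).trans_lt hb
  set r := b ^ (N⁻¹ : ℝ)
  have hrN : r ^ N = b := Real.rpow_inv_natCast_pow hb0.le (Nat.succ_ne_zero _)
  have hr0 : 0 < r := Real.rpow_pos_of_pos hb0 _
  have hr1 : r < 1 := Real.rpow_lt_one hb0.le hb1 (by positivity)
  have hpow : ∀ k S, survProb lam T (k * N) S ≤ b ^ k := by
    intro k
    induction k with
    | zero => simpa using survProb_le_one T hnonneg hpos 0
    | succ k ih =>
      intro S
      rw [Nat.succ_mul, pow_succ']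
      exact (survProb_add_le_mul T hnonneg (fun a => (hS₁ a).trans hb.le) _ S).trans
        (mul_le_mul_of_nonneg_left (ih S) hb0.le)
  refine ⟨b⁻¹, r, hr0.le, hr1, fun n S => ?_⟩
  rw [← hrN]
  exact le_inv_mul_pow_of_antitone (survProb_antitone T hnonneg hpos S) (Nat.succ_pos _) hr0 hr1.le
    (fun k => hrN ▸ hpow k S) n

lemma hasSum_hitProb (hconn : ∀ a, Relation.ReflTransGen (fun x y => 0 < lam x y) a T) (S : Ξ) :
    HasSum (hitProb lam T · S) 1 := by
  obtain ⟨C, r, hr0, hr1, hsurv⟩ := exists_survProb_le_geometric T hnonneg hpos hconn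
  have hlim : Tendsto (survProb lam T · S) atTop (𝓝 0) :=
    squeeze_zero (fun n => survProb_nonneg T hnonneg n S) (fun n => hsurv n S)
      (by simpa using (tendsto_pow_atTop_nhds_zero_of_lt_one hr0 hr1).const_mul C)
  rw [hasSum_iff_tendsto_nat_of_nonneg (hitProb_nonneg T hnonneg · S),
    ← tendsto_add_atTop_iff_nat 1]
  simp_rw [eq_sub_of_add_eq (sum_range_hitProb_add_survProb T hpos _ S)]
  simpa using hlim.const_sub 1

end Decay

lemma abs_pathSum_le {f : Ξ → Ξ → ℝ} {M : ℝ} (hM : ∀ a b, |f a b| ≤ M) {n : ℕ}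
    (x : Fin (n + 1) → Ξ) : |pathSum f x| ≤ n * M :=
  calc |pathSum f x| ≤ ∑ k : Fin n, |f (x k.castSucc) (x k.succ)| := abs_sum_le_sum_abs _ _
    _ ≤ ∑ _k : Fin n, M := sum_le_sum fun k _ => hM _ _
    _ = n * M := by simp

section Value

variable [Fintype Ξ] [DecidableEq Ξ] {lam : Ξ → Ξ → ℝ} (f : Ξ → Ξ → ℝ) (T : Ξ)

lemma abs_hitValue_le (hnonneg : ∀ a b, 0 ≤ lam a b) {M : ℝ} (hM : ∀ a b, |f a b| ≤ M)
    (n : ℕ) (S : Ξ) : |hitValue lam f T n S| ≤ n * M * hitProb lam T n S := by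
  rw [hitProb, mul_sum]
  refine (abs_sum_le_sum_abs _ _).trans (sum_le_sum fun x _ => ?_)
  rw [abs_mul, abs_of_nonneg (pathProb_nonneg lam hnonneg x), mul_comm]
  exact mul_le_mul_of_nonneg_right (abs_pathSum_le hM x) (pathProb_nonneg lam hnonneg x)

variable (hnonneg : ∀ a b, 0 ≤ lam a b) (hpos : ∀ a, 0 < ∑ b, lam a b)
  (hconn : ∀ a, Relation.ReflTransGen (fun x y => 0 < lam x y) a T)
include hnonneg hpos hconn

lemma summable_hitValue (S : Ξ) : Summable (hitValue lam f T · S) := by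
  obtain ⟨M, hM⟩ := (Set.finite_range fun p : Ξ × Ξ => |f p.1 p.2|).bddAbove
  replace hM : ∀ a b, |f a b| ≤ M := fun a b => hM ⟨(a, b), rfl⟩
  have hM0 : 0 ≤ M := (abs_nonneg _).trans (hM S S)
  obtain ⟨C, r, hr0, hr1, hsurv⟩ := exists_survProb_le_geometric T hnonneg hpos hconn
  rw [← summable_nat_add_iff 1]
  refine .of_norm_bounded (g := fun n => M * C * ((n : ℝ) ^ 1 * r ^ n + r ^ n))
    (((summable_pow_mul_geometric_of_norm_lt_one 1 (by rwa [Real.norm_of_nonneg hr0])).add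
      (summable_geometric_of_lt_one hr0 hr1)).mul_left _) fun n => ?_
  calc ‖hitValue lam f T (n + 1) S‖ ≤ (n + 1 : ℕ) * M * hitProb lam T (n + 1) S :=
        abs_hitValue_le f T hnonneg hM _ S
    _ ≤ (n + 1 : ℕ) * M * (C * r ^ n) := by
        gcongr
        exact (hitProb_succ_le_survProb T hnonneg hpos n S).trans (hsurv n S)
    _ = M * C * ((n : ℝ) ^ 1 * r ^ n + r ^ n) := by push_cast; ring

lemma pathValue_eq_sum_transProb (hsymm : ∀ a b, lam a b = lam b a)
    (hf : ∀ a b, f b a = -f a b) (S : Ξ) :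
    pathValue lam f S T = ∑ a, transProb lam S a * (f S a + pathValue lam f a T) := by
  have hstep : HasSum (fun n => hitValue lam f T (n + 1) S)
      (∑ a, transProb lam S a * (f S a * 1 + pathValue lam f a T)) := by
    simp_rw [hitValue_succ lam f T hsymm hf S]
    exact hasSum_sum fun a _ => ((((hasSum_hitProb T hnonneg hpos hconn a).mul_left (f S a)).add
      (summable_hitValue f T hnonneg hpos hconn a).hasSum).mul_left _)
  have hsum := (hasSum_nat_add_iff (f := (hitValue lam f T · S)) 1).1 hstep
  rw [sum_range_one, hitValue_zero, add_zero] at hsum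
  simp only [mul_one] at hsum
  exact hsum.tsum_eq

end Value

section Harmonic

variable [Fintype Ξ] {lam : Ξ → Ξ → ℝ}

def IsHarmonic (lam : Ξ → Ξ → ℝ) (u : Ξ → ℝ) : Prop :=
  ∀ X, u X = ∑ a, transProb lam X a * u a

lemma IsHarmonic.eq (hnonneg : ∀ a b, 0 ≤ lam a b) (hpos : ∀ a, 0 < ∑ b, lam a b)
    (hconn : ∀ a b, Relation.ReflTransGen (fun x y => 0 < lam x y) a b) {u : Ξ → ℝ}
    (hu : IsHarmonic lam u) (X Y : Ξ) : u X = u Y := by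
  have : Nonempty Ξ := ⟨X⟩
  obtain ⟨X₀, hX₀⟩ := Finite.exists_max u
  have hstep : ∀ b c, u b = u X₀ → 0 < lam b c → u c = u X₀ := by
    intro b c hb hbc
    have hzero : ∑ a, transProb lam b a * (u X₀ - u a) = 0 := by
      simp_rw [mul_sub, sum_sub_distrib, ← sum_mul, sum_transProb_eq_one lam (hpos b).ne', ← hu b,
        hb, one_mul, sub_self]
    have hc := (sum_eq_zero_iff_of_nonneg fun a _ =>
      mul_nonneg (transProb_nonneg lam hnonneg b a) (sub_nonneg.2 (hX₀ a))).1 hzero c (mem_univ c)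
    rcases mul_eq_zero.1 hc with h | h
    · exact absurd h (div_pos hbc (hpos b)).ne'
    · linarith
  have hmax : ∀ Y, u Y = u X₀ := fun Y => by
    induction hconn X₀ Y with
    | refl => rfl
    | tail _ hbc ih => exact hstep _ _ ih hbc
  rw [hmax X, hmax Y]

lemma sum_lam_pos_of_ne (hnonneg : ∀ a b, 0 ≤ lam a b)
    (hconn : ∀ a b, Relation.ReflTransGen (fun x y => 0 < lam x y) a b) {S T : Ξ} (hST : S ≠ T)
    (a : Ξ) : 0 < ∑ b, lam a b := by
  obtain ⟨c, hca⟩ : ∃ c, c ≠ a := by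
    by_cases haS : a = S
    · exact ⟨T, haS ▸ hST.symm⟩
    · exact ⟨S, Ne.symm haS⟩
  rcases (hconn a c).cases_head with rfl | ⟨b, hab, -⟩
  · exact absurd rfl hca
  · exact hab.trans_le (single_le_sum (fun b _ => hnonneg a b) (mem_univ b))

end Harmonic

theorem stmt_11_general [Fintype Ξ] [DecidableEq Ξ]
    (lam : Ξ → Ξ → ℝ) (hsymm : ∀ a b, lam a b = lam b a)
    (hnonneg : ∀ a b, 0 ≤ lam a b)
    (hconn : ∀ a b : Ξ, Relation.ReflTransGen (fun x y => 0 < lam x y) a b)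
    (f : Ξ → Ξ → ℝ) (hf : ∀ a b, f b a = -f a b) :
    ∀ S T U : Ξ, pathValue lam f U T - pathValue lam f U S
      = pathValue lam f S T := by
  intro S T U
  rcases eq_or_ne S T with rfl | hST
  · rw [sub_self, pathValue_self]
  have hpos := sum_lam_pos_of_ne hnonneg hconn hST
  have hfirst := fun T =>
    pathValue_eq_sum_transProb f T hnonneg hpos (fun a => hconn a T) hsymm hf
  have hharm : IsHarmonic lam fun X => pathValue lam f X T - pathValue lam f X S := fun X => by
    dsimp only
    rw [hfirst T X, hfirst S X, ← sum_sub_distrib]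
    simp only [← mul_sub, add_sub_add_left_eq_sub]
  simpa [pathValue_self] using hharm.eq hnonneg hpos hconn U S

/-- Transition (cocycle) formula for the path-integral value: for the canonical
Markov chain on a finite connected weighted graph, any antisymmetric edge flow
`f` and any states `S, T, U`, one has `V_f^U(T) − V_f^U(S) = V_f^S(T)`. -/
theorem stmt_11 [Fintype Ξ] [DecidableEq Ξ]
    (lam : Ξ → Ξ → ℝ) (hsymm : ∀ a b, lam a b = lam b a)
    (hnonneg : ∀ a b, 0 ≤ lam a b) (hirrefl : ∀ a, lam a a = 0)
    (hconn : ∀ a b : Ξ, Relation.ReflTransGen (fun x y => 0 < lam x y) a b)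
    (f : Ξ → Ξ → ℝ) (hf : ∀ a b, f b a = -f a b) :
    ∀ S T U : Ξ, pathValue lam f U T - pathValue lam f U S
      = pathValue lam f S T :=
  stmt_11_general lam hsymm hnonneg hconn f hf
end

section
/- The path-integral value function solves the discrete Poisson equation: for the canonical Markov chain on a connected weighted graph (G, λ) and any edge flow f ∈ ℓ²(E), the function T ↦ V_f^S(T) satisfies d*d V_f^S = d* f on the connected component containing S. -/
open Finset

variable {Ξ : Type*}

/-!
Write `u a = V_f^a(S)`. First-step analysis shows that `u` solves the Poisson equation
`d*(du + f) = 0` at every vertex `a ≠ S` of the component of `S`; since `d*` of an antisymmetric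
flow sums to zero over a component, the equation holds at `S` as well. For `T` in the component,
`a ↦ V_f^a(T)` and `a ↦ u a - u T` both vanish at `T` and solve the same equation off `T`, so
by the maximum principle they agree, giving `V_f^S(T) = -u T`. The claim at `S'` is then the
Poisson equation for `u` at `S'`. The series defining `V` converge because the chain killed at
`T` is still alive at time `n` with probability decaying geometrically in `n`.
-/

theorem exists_pow_div_le_geometric {α : ℝ} (h0 : 0 ≤ α) (h1 : α < 1) {N : ℕ}
    (hN : N ≠ 0) :
    ∃ C β : ℝ, 0 ≤ C ∧ 0 ≤ β ∧ β < 1 ∧ ∀ n, α ^ (n / N) ≤ C * β ^ n := by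
  set γ := max α 2⁻¹
  have hγ0 : 0 < γ := lt_max_of_lt_right (by norm_num)
  have hγ1 : γ < 1 := max_lt h1 (by norm_num)
  set β := γ ^ (N⁻¹ : ℝ)
  have hβ0 : 0 ≤ β := Real.rpow_nonneg hγ0.le _
  have hβN : β ^ N = γ := Real.rpow_inv_natCast_pow hγ0.le hN
  have hβ1 : β < 1 := Real.rpow_lt_one hγ0.le hγ1 (by positivity)
  refine ⟨γ⁻¹, β, inv_nonneg.2 hγ0.le, hβ0, hβ1, fun n => ?_⟩
  calc α ^ (n / N) ≤ γ ^ (n / N) := pow_le_pow_left₀ h0 (le_max_left _ _) _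
    _ = γ⁻¹ * (β ^ (N * (n / N)) * β ^ N) := by
        rw [pow_mul, hβN, mul_comm, mul_assoc, mul_inv_cancel₀ hγ0.ne', mul_one]
    _ ≤ γ⁻¹ * (β ^ (N * (n / N)) * β ^ (n % N)) := by
        refine mul_le_mul_of_nonneg_left (mul_le_mul_of_nonneg_left ?_ (by positivity))
          (inv_nonneg.2 hγ0.le)
        exact pow_le_pow_of_le_one hβ0 hβ1.le (Nat.mod_lt n (Nat.pos_of_ne_zero hN)).le
    _ = γ⁻¹ * β ^ n := by rw [← pow_add, Nat.div_add_mod]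

namespace CanonicalChain

variable {Ξ : Type*}

abbrev Reaches (lam : Ξ → Ξ → ℝ) : Ξ → Ξ → Prop :=
  Relation.ReflTransGen fun x y => 0 < lam x y

theorem Reaches.symm {lam : Ξ → Ξ → ℝ} (hsymm : ∀ a b, lam a b = lam b a) {a b : Ξ}
    (h : Reaches lam a b) : Reaches lam b a :=
  have : Std.Symm fun x y => 0 < lam x y := ⟨fun x y hxy => hsymm x y ▸ hxy⟩
  Relation.ReflTransGen.stdSymm.symm _ _ h

theorem Reaches.of_lam_ne_zero {lam : Ξ → Ξ → ℝ} (hsymm : ∀ a b, lam a b = lam b a)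
    (hnn : ∀ a b, 0 ≤ lam a b) {S a b : Ξ} (ha : Reaches lam S a) (hba : lam b a ≠ 0) :
    Reaches lam S b :=
  ha.tail (hsymm b a ▸ (hnn b a).lt_of_ne' hba)

def grad (u : Ξ → ℝ) (a b : Ξ) : ℝ := u b - u a

theorem pathSum_cons (f : Ξ → Ξ → ℝ) {n : ℕ} (c : Ξ) (y : Fin (n + 1) → Ξ) :
    pathSum f (Fin.cons c y : Fin (n + 2) → Ξ) = f c (y 0) + pathSum f y := by
  simp [pathSum, Fin.sum_univ_succ]

theorem abs_pathSum_le {f : Ξ → Ξ → ℝ} {M : ℝ} (hM : ∀ a b, |f a b| ≤ M) {n : ℕ}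
    (x : Fin (n + 1) → Ξ) : |pathSum f x| ≤ n * M :=
  (abs_sum_le_sum_abs _ _).trans <| by
    simpa using sum_le_card_nsmul univ _ M fun (k : Fin n) _ => hM (x k.castSucc) (x k.succ)

theorem firstHit_cons_iff [DecidableEq Ξ] {S T c : Ξ} {n : ℕ} (y : Fin (n + 1) → Ξ) :
    FirstHit S T (Fin.cons c y : Fin (n + 2) → Ξ) ↔
      c = S ∧ S ≠ T ∧ FirstHit (y 0) T y := by
  simp only [FirstHit, Fin.forall_fin_succ, Fin.castSucc_zero, Fin.cons_zero,
    ← Fin.succ_castSucc, Fin.cons_succ, ← Fin.succ_last]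
  constructor
  · rintro ⟨rfl, hlast, hc, hy⟩
    exact ⟨rfl, hc, trivial, hlast, hy⟩
  · rintro ⟨rfl, hc, -, hlast, hy⟩
    exact ⟨rfl, hlast, hc, hy⟩

section Poisson

variable [Fintype Ξ] {lam : Ξ → Ξ → ℝ}

/-- The codifferential `d*` of the paper, without its normalising factor. -/
def dstar (lam g : Ξ → Ξ → ℝ) (a : Ξ) : ℝ := ∑ b, lam b a * g b a

theorem dstar_sub (g h : Ξ → Ξ → ℝ) (a : Ξ) :
    dstar lam (g - h) a = dstar lam g a - dstar lam h a := by
  simp only [dstar, Pi.sub_apply, mul_sub, sum_sub_distrib]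

theorem sum_dstar_eq_zero (hsymm : ∀ a b, lam a b = lam b a) {g : Ξ → Ξ → ℝ}
    (hg : ∀ a b, g b a = -g a b) {s : Finset Ξ}
    (hs : ∀ a ∈ s, ∀ b, lam b a ≠ 0 → b ∈ s) :
    ∑ a ∈ s, dstar lam g a = 0 := by
  have hsub : ∑ a ∈ s, dstar lam g a = ∑ a ∈ s, ∑ b ∈ s, lam b a * g b a :=
    sum_congr rfl fun a ha => (sum_subset (subset_univ s) fun b _ hb =>
      by rw [not_imp_comm.1 (hs a ha b) hb, zero_mul]).symm
  have hswap :
      ∑ a ∈ s, ∑ b ∈ s, lam b a * g b a = -∑ a ∈ s, ∑ b ∈ s, lam b a * g b a := by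
    conv_lhs => rw [sum_comm]
    rw [← sum_neg_distrib]
    refine sum_congr rfl fun a _ => ?_
    rw [← sum_neg_distrib]
    refine sum_congr rfl fun b _ => ?_
    rw [hsymm a b, hg a b, mul_neg, neg_neg]
  linarith

theorem dstar_grad_add_eq_zero (hsymm : ∀ a b, lam a b = lam b a) {g : Ξ → Ξ → ℝ}
    (hg : ∀ a b, g b a = -g a b) {u : Ξ → ℝ} {a : Ξ} (ha : ∑ c, lam a c ≠ 0)
    (hu : u a = ∑ c, transProb lam a c * (u c + g a c)) : dstar lam (grad u + g) a = 0 := by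
  have hmul : ∑ b, lam a b * (u b + g a b) = (∑ c, lam a c) * u a := by
    rw [hu, mul_sum]
    exact sum_congr rfl fun b _ => by rw [transProb]; field_simp
  calc dstar lam (grad u + g) a = ∑ b, (lam a b * u a - lam a b * (u b + g a b)) :=
        sum_congr rfl fun b _ => by simp only [grad, Pi.add_apply, hsymm b a, hg a b]; ring
    _ = 0 := by rw [sum_sub_distrib, ← sum_mul, hmul, sub_self]

variable (hsymm : ∀ a b, lam a b = lam b a) (hnn : ∀ a b, 0 ≤ lam a b)
include hsymm hnn

theorem dstar_eq_zero_of_forall_ne {g : Ξ → Ξ → ℝ}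
    (hg : ∀ a b, g b a = -g a b) {S : Ξ}
    (h : ∀ a, Reaches lam S a → a ≠ S → dstar lam g a = 0) : dstar lam g S = 0 := by
  classical
  have hsum := sum_dstar_eq_zero hsymm hg (s := univ.filter (Reaches lam S)) fun a ha b hba =>
    mem_filter.2 ⟨mem_univ b, (mem_filter.1 ha).2.of_lam_ne_zero hsymm hnn hba⟩
  rwa [sum_eq_single_of_mem S (mem_filter.2 ⟨mem_univ S, .refl⟩)
    fun a ha haS => h a (mem_filter.1 ha).2 haS] at hsum

/-- Maximum principle for functions harmonic off `T`. -/
theorem le_of_dstar_grad_eq_zero {T : Ξ} {w : Ξ → ℝ}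
    (hw : ∀ a, Reaches lam a T → a ≠ T → dstar lam (grad w) a = 0) {a : Ξ}
    (ha : Reaches lam a T) : w a ≤ w T := by
  classical
  obtain ⟨m, hm, hmax⟩ := (univ.filter (Reaches lam · T)).exists_max_image w
    ⟨T, mem_filter.2 ⟨mem_univ T, .refl⟩⟩
  simp only [mem_filter, mem_univ, true_and] at hm hmax
  suffices hTm : ∀ b, Reaches lam b T → w b = w m → w T = w m from
    (hmax a ha).trans (hTm m hm rfl).ge
  intro b hb
  induction hb using Relation.ReflTransGen.head_induction_on with
  | refl => exact id
  | @head b c hbc hc ih =>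
    intro hbm
    by_cases hbT : b = T
    · exact hbT ▸ hbm
    have hterm : ∀ d ∈ univ, 0 ≤ lam d b * grad w d b := fun d _ => by
      rcases (hnn d b).eq_or_lt with h0 | hpos
      · rw [← h0, zero_mul]
      · have hd : Reaches lam d T := .head hpos (.head hbc hc)
        exact mul_nonneg hpos.le (by rw [grad, hbm]; linarith [hmax d hd])
    have hc0 := (sum_eq_zero_iff_of_nonneg hterm).1 (hw b (.head hbc hc) hbT) c (mem_univ c)
    rw [hsymm c b] at hc0
    apply ih
    rw [← hbm]
    have := (mul_eq_zero.1 hc0).resolve_left hbc.ne'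
    rw [grad] at this
    linarith

theorem eq_zero_of_dstar_grad_eq_zero {T : Ξ} {w : Ξ → ℝ} (hT : w T = 0)
    (hw : ∀ a, Reaches lam a T → a ≠ T → dstar lam (grad w) a = 0) {a : Ξ}
    (ha : Reaches lam a T) : w a = 0 := by
  have hneg : ∀ a, Reaches lam a T → a ≠ T → dstar lam (grad (-w)) a = 0 :=
    fun a ha haT => by
    have : grad (-w) = 0 - grad w := by ext; simp [grad]; ring
    rw [this, dstar_sub, hw a ha haT, sub_zero]
    simp [dstar]
  have h1 := le_of_dstar_grad_eq_zero hsymm hnn hw ha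
  have h2 := le_of_dstar_grad_eq_zero hsymm hnn hneg ha
  simp only [Pi.neg_apply] at h2
  linarith

end Poisson

section Chain

variable [Fintype Ξ] {lam : Ξ → Ξ → ℝ}

theorem transProb_nonneg (hnn : ∀ a b, 0 ≤ lam a b) (a b : Ξ) :
    0 ≤ transProb lam a b :=
  div_nonneg (hnn a b) (sum_nonneg fun c _ => hnn a c)

theorem pathProb_nonneg (hnn : ∀ a b, 0 ≤ lam a b) {n : ℕ}
    (x : Fin (n + 1) → Ξ) : 0 ≤ pathProb lam x :=
  prod_nonneg fun _ _ => transProb_nonneg hnn _ _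

theorem sum_lam_pos (hnn : ∀ a b, 0 ≤ lam a b) {a b : Ξ} (hab : 0 < lam a b) :
    0 < ∑ c, lam a c :=
  hab.trans_le (single_le_sum (fun c _ => hnn a c) (mem_univ b))

theorem sum_lam_pos_of_reaches (hnn : ∀ a b, 0 ≤ lam a b) {a T : Ξ}
    (ha : Reaches lam a T) (haT : a ≠ T) : 0 < ∑ c, lam a c := by
  obtain ⟨c, hac, -⟩ := (ha.cases_head).resolve_left haT
  exact sum_lam_pos hnn hac

theorem transProb_pos (hnn : ∀ a b, 0 ≤ lam a b) {a b : Ξ} (hab : 0 < lam a b) :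
    0 < transProb lam a b :=
  div_pos hab (sum_lam_pos hnn hab)

theorem sum_transProb_le_one (a : Ξ) : ∑ b, transProb lam a b ≤ 1 := by
  simp only [transProb, ← sum_div]
  exact div_self_le_one _

theorem pathProb_cons {n : ℕ} (c : Ξ) (y : Fin (n + 1) → Ξ) :
    pathProb lam (Fin.cons c y : Fin (n + 2) → Ξ) = transProb lam c (y 0) * pathProb lam y := by
  simp [pathProb, Fin.prod_univ_succ]

variable [DecidableEq Ξ]

theorem sum_firstHit_succ {M : Type*} [AddCommMonoid M] (S T : Ξ) (n : ℕ)
    (F : (Fin (n + 2) → Ξ) → M) :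
    ∑ x ∈ univ.filter (FirstHit S T (n := n + 1)), F x
      = if S = T then 0
        else ∑ c, ∑ y ∈ univ.filter (FirstHit c T (n := n)), F (Fin.cons S y) := by
  split_ifs with hST
  · refine sum_eq_zero fun x hx => absurd ?_ ((mem_filter.1 hx).2.2.2 0)
    rw [Fin.castSucc_zero, (mem_filter.1 hx).2.1, hST]
  rw [sum_filter, ← (Fin.consEquiv fun _ => Ξ).sum_comp, Fintype.sum_prod_type]
  simp only [Fin.consEquiv, Equiv.coe_fn_mk, firstHit_cons_iff, ne_eq, hST, not_false_eq_true,
    true_and, ite_and, sum_filter]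
  rw [sum_comm, sum_comm (s := univ) (t := univ) (f := fun c y => if FirstHit c T y then _ else 0)]
  refine sum_congr rfl fun y _ => ?_
  rw [sum_ite_eq', if_pos (mem_univ S), sum_eq_single (y 0)
    (fun c _ hc => if_neg fun h => hc h.1.symm) (fun h => absurd (mem_univ _) h)]

end Chain

section KilledChain

variable [Fintype Ξ] [DecidableEq Ξ] {lam f : Ξ → Ξ → ℝ}

noncomputable def killedMatrix (lam : Ξ → Ξ → ℝ) (T : Ξ) : Matrix Ξ Ξ ℝ :=
  Matrix.of fun a b => if a = T then 0 else transProb lam a b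

theorem killedMatrix_apply (T a b : Ξ) :
    killedMatrix lam T a b = if a = T then 0 else transProb lam a b := rfl

theorem killedMatrix_pow_succ_apply (T : Ξ) (n : ℕ) (a b : Ξ) :
    (killedMatrix lam T ^ (n + 1)) a b
      = ∑ c, killedMatrix lam T a c * (killedMatrix lam T ^ n) c b := by
  rw [pow_succ', Matrix.mul_apply]

theorem sum_firstHit_pathProb (T : Ξ) (n : ℕ) (a : Ξ) :
    ∑ x ∈ univ.filter (FirstHit a T (n := n)), pathProb lam x
      = (killedMatrix lam T ^ n) a T := by
  induction n generalizing a with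
  | zero =>
    rw [pow_zero, Matrix.one_apply, sum_filter, ← (Equiv.funUnique (Fin 1) Ξ).symm.sum_comp]
    obtain rfl | haT := eq_or_ne a T <;> simp [FirstHit, pathProb, *]
  | succ n ih =>
    rw [sum_firstHit_succ, killedMatrix_pow_succ_apply]
    simp only [pathProb_cons, killedMatrix_apply]
    split_ifs
    · simp
    refine sum_congr rfl fun c _ => ?_
    rw [← ih, mul_sum]
    exact sum_congr rfl fun y hy => by rw [(mem_filter.1 hy).2.1]

noncomputable def hitValue (lam f : Ξ → Ξ → ℝ) (T : Ξ) (n : ℕ) (a : Ξ) : ℝ :=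
  ∑ x ∈ univ.filter (FirstHit a T (n := n)), pathProb lam x * pathSum f x

theorem pathValue_eq_tsum_hitValue (a T : Ξ) :
    pathValue lam f a T = ∑' n, hitValue lam f T n a := rfl

theorem hitValue_zero (T a : Ξ) : hitValue lam f T 0 a = 0 :=
  sum_eq_zero fun x _ => by simp [pathSum]

theorem hitValue_succ (T : Ξ) (n : ℕ) (a : Ξ) :
    hitValue lam f T (n + 1) a = ∑ c, killedMatrix lam T a c *
      (f a c * (killedMatrix lam T ^ n) c T + hitValue lam f T n c) := by
  rw [hitValue, sum_firstHit_succ]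
  simp only [pathProb_cons, pathSum_cons, killedMatrix_apply]
  split_ifs
  · simp
  refine sum_congr rfl fun c _ => ?_
  simp only [← sum_firstHit_pathProb, hitValue, mul_sum, ← sum_add_distrib]
  exact sum_congr rfl fun y hy => by rw [(mem_filter.1 hy).2.1]; ring

/-- The probability that the chain started at `a` has not hit `T` before time `n`. -/
noncomputable def survivalProb (lam : Ξ → Ξ → ℝ) (T : Ξ) (n : ℕ) (a : Ξ) : ℝ :=
  ∑ b, (killedMatrix lam T ^ n) a b

theorem survivalProb_zero (T a : Ξ) : survivalProb lam T 0 a = 1 := by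
  simp [survivalProb, Matrix.one_apply]

theorem survivalProb_add (T : Ξ) (m n : ℕ) (a : Ξ) :
    survivalProb lam T (m + n) a
      = ∑ b, (killedMatrix lam T ^ m) a b * survivalProb lam T n b := by
  simp only [survivalProb, pow_add, Matrix.mul_apply, mul_sum]
  exact sum_comm

variable (hnn : ∀ a b, 0 ≤ lam a b)
include hnn

theorem killedMatrix_nonneg (T a b : Ξ) : 0 ≤ killedMatrix lam T a b := by
  rw [killedMatrix_apply]
  split_ifs
  exacts [le_rfl, transProb_nonneg hnn a b]

theorem killedMatrix_pow_nonneg (T : Ξ) (n : ℕ) (a b : Ξ) :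
    0 ≤ (killedMatrix lam T ^ n) a b :=
  Matrix.pow_apply_nonneg (killedMatrix_nonneg hnn T) n a b

theorem reaches_of_killedMatrix_pow_ne_zero {T : Ξ} {n : ℕ} {a b : Ξ}
    (h : (killedMatrix lam T ^ n) a b ≠ 0) : Reaches lam a b := by
  induction n generalizing a with
  | zero =>
    rw [pow_zero, Matrix.one_apply] at h
    exact (of_not_not fun hab => h (if_neg hab)) ▸ .refl
  | succ n ih =>
    rw [killedMatrix_pow_succ_apply] at h
    obtain ⟨c, -, hc⟩ := exists_ne_zero_of_sum_ne_zero h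
    have hac : transProb lam a c ≠ 0 := by
      rw [killedMatrix_apply] at hc; split_ifs at hc <;> simp_all
    refine .head ((hnn a c).lt_of_ne' fun h0 => hac ?_) (ih (right_ne_zero_of_mul hc))
    rw [transProb, h0, zero_div]

theorem exists_killedMatrix_pow_pos {a T : Ξ}
    (ha : Reaches lam a T) : ∃ n, 0 < (killedMatrix lam T ^ n) a T := by
  induction ha using Relation.ReflTransGen.head_induction_on with
  | refl => exact ⟨0, by simp⟩
  | @head a c hac _ ih =>
    by_cases haT : a = T
    · exact ⟨0, by simp [haT]⟩
    obtain ⟨n, hn⟩ := ih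
    refine ⟨n + 1, ?_⟩
    rw [killedMatrix_pow_succ_apply]
    refine lt_of_lt_of_le ?_ (single_le_sum (f := fun d =>
      killedMatrix lam T a d * (killedMatrix lam T ^ n) d T) (fun d _ => mul_nonneg
      (killedMatrix_nonneg hnn T a d) (killedMatrix_pow_nonneg hnn T n d T)) (mem_univ c))
    rw [killedMatrix_apply, if_neg haT]
    exact mul_pos (transProb_pos hnn hac) hn

theorem abs_hitValue_le {M : ℝ} (hM : ∀ a b, |f a b| ≤ M)
    (T : Ξ) (n : ℕ) (a : Ξ) :
    |hitValue lam f T n a| ≤ n * M * (killedMatrix lam T ^ n) a T := by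
  rw [← sum_firstHit_pathProb, mul_sum]
  refine (abs_sum_le_sum_abs _ _).trans (sum_le_sum fun x _ => ?_)
  rw [abs_mul, abs_of_nonneg (pathProb_nonneg hnn x), mul_comm]
  exact mul_le_mul_of_nonneg_right (abs_pathSum_le hM x) (pathProb_nonneg hnn x)

theorem survivalProb_nonneg (T : Ξ) (n : ℕ) (a : Ξ) : 0 ≤ survivalProb lam T n a :=
  sum_nonneg fun b _ => killedMatrix_pow_nonneg hnn T n a b

theorem survivalProb_succ_le (T : Ξ) (n : ℕ) (a : Ξ) :
    survivalProb lam T (n + 1) a ≤ survivalProb lam T n a - (killedMatrix lam T ^ n) a T := by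
  have hrow : ∀ b, survivalProb lam T 1 b ≤ 1 - if b = T then 1 else 0 := fun b => by
    simp only [survivalProb, pow_one, killedMatrix_apply]
    split_ifs
    · simp
    · simpa using sum_transProb_le_one (lam := lam) b
  calc survivalProb lam T (n + 1) a
      ≤ ∑ b, (killedMatrix lam T ^ n) a b * (1 - if b = T then 1 else 0) := by
        rw [survivalProb_add]
        exact sum_le_sum fun b _ =>
          mul_le_mul_of_nonneg_left (hrow b) (killedMatrix_pow_nonneg hnn T n a b)
    _ = survivalProb lam T n a - (killedMatrix lam T ^ n) a T := by
        simp [survivalProb, mul_sub, sum_sub_distrib]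

theorem survivalProb_antitone (T a : Ξ) : Antitone fun n => survivalProb lam T n a :=
  antitone_nat_of_succ_le fun n => (survivalProb_succ_le hnn T n a).trans
    (sub_le_self _ (killedMatrix_pow_nonneg hnn T n a T))

theorem exists_survivalProb_lt_one {a T : Ξ} (ha : Reaches lam a T) :
    ∃ n, survivalProb lam T n a < 1 := by
  obtain ⟨k, hk⟩ := exists_killedMatrix_pow_pos hnn ha
  refine ⟨k + 1, (survivalProb_succ_le hnn T k a).trans_lt ?_⟩
  have : survivalProb lam T k a ≤ survivalProb lam T 0 a :=
    survivalProb_antitone hnn T a (Nat.zero_le k)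
  rw [survivalProb_zero] at this
  linarith

theorem survivalProb_add_le (hsymm : ∀ a b, lam a b = lam b a) {T : Ξ} {n : ℕ} {α : ℝ}
    (hα : ∀ b, Reaches lam b T → survivalProb lam T n b ≤ α) (m : ℕ) {a : Ξ}
    (ha : Reaches lam a T) : survivalProb lam T (m + n) a ≤ survivalProb lam T m a * α := by
  rw [survivalProb_add, survivalProb, sum_mul]
  refine sum_le_sum fun b _ => ?_
  by_cases hab : (killedMatrix lam T ^ m) a b = 0
  · simp [hab]
  exact mul_le_mul_of_nonneg_left
    (hα b (((reaches_of_killedMatrix_pow_ne_zero hnn hab).symm hsymm).trans ha))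
    (killedMatrix_pow_nonneg hnn T m a b)

/-- From every vertex of the component of `T` the chain hits `T` within `N` steps with
probability at least `1 - α > 0`, so it survives `n` steps with probability at most
`α ^ (n / N)`. -/
theorem exists_killedMatrix_pow_le_geometric (hsymm : ∀ a b, lam a b = lam b a) (T : Ξ) :
    ∃ C β : ℝ, 0 ≤ C ∧ 0 ≤ β ∧ β < 1 ∧
      ∀ n a, (killedMatrix lam T ^ n) a T ≤ C * β ^ n := by
  classical
  set s := univ.filter (Reaches lam · T)
  have hmem : ∀ {a}, a ∈ s ↔ Reaches lam a T := by simp [s]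
  choose! k hk using fun a (ha : a ∈ s) => exists_survivalProb_lt_one hnn (hmem.1 ha)
  set N := s.sup k
  have hs : s.Nonempty := ⟨T, hmem.2 .refl⟩
  set α := s.sup' hs (survivalProb lam T N)
  have hαN : ∀ a, Reaches lam a T → survivalProb lam T N a ≤ α := fun a ha =>
    le_sup' (survivalProb lam T N) (hmem.2 ha)
  have hα1 : α < 1 := (sup'_lt_iff hs).2 fun a ha =>
    (survivalProb_antitone hnn T a (le_sup ha)).trans_lt (hk a ha)
  have hα0 : 0 ≤ α := (survivalProb_nonneg hnn T N T).trans (hαN T .refl)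
  have hN : N ≠ 0 := fun h0 => by
    have := hαN T .refl
    rw [h0, survivalProb_zero] at this
    linarith
  have hpow : ∀ j a, Reaches lam a T → survivalProb lam T (N * j) a ≤ α ^ j := by
    intro j
    induction j with
    | zero => simp [survivalProb_zero]
    | succ j ih =>
      intro a ha
      rw [Nat.mul_succ, pow_succ]
      exact (survivalProb_add_le hnn hsymm hαN _ ha).trans
        (mul_le_mul_of_nonneg_right (ih a ha) hα0)
  obtain ⟨C, β, hC0, hβ0, hβ1, hC⟩ := exists_pow_div_le_geometric hα0 hα1 hN
  refine ⟨C, β, hC0, hβ0, hβ1, fun n a => ?_⟩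
  by_cases ha : Reaches lam a T
  · calc (killedMatrix lam T ^ n) a T ≤ survivalProb lam T n a :=
          single_le_sum (fun b _ => killedMatrix_pow_nonneg hnn T n a b) (mem_univ T)
      _ ≤ survivalProb lam T (N * (n / N)) a := survivalProb_antitone hnn T a (Nat.mul_div_le n N)
      _ ≤ α ^ (n / N) := hpow _ a ha
      _ ≤ C * β ^ n := hC n
  · rw [of_not_not fun h => ha (reaches_of_killedMatrix_pow_ne_zero hnn h)]
    positivity

end KilledChain

section Value

variable [Fintype Ξ] [DecidableEq Ξ] {lam : Ξ → Ξ → ℝ}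

theorem pathValue_self (f : Ξ → Ξ → ℝ) (T : Ξ) : pathValue lam f T T = 0 := by
  have : ∀ n, hitValue lam f T n T = 0 := by
    rintro (_ | n)
    · exact hitValue_zero T T
    · simp [hitValue_succ, killedMatrix_apply]
  simp [pathValue_eq_tsum_hitValue, this]

variable (hsymm : ∀ a b, lam a b = lam b a) (hnn : ∀ a b, 0 ≤ lam a b)
include hsymm hnn

theorem summable_killedMatrix_pow (T a : Ξ) : Summable fun n => (killedMatrix lam T ^ n) a T := by
  obtain ⟨C, β, -, hβ0, hβ1, hC⟩ := exists_killedMatrix_pow_le_geometric hnn hsymm T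
  exact .of_nonneg_of_le (fun n => killedMatrix_pow_nonneg hnn T n a T) (fun n => hC n a)
    ((summable_geometric_of_lt_one hβ0 hβ1).mul_left C)

theorem summable_hitValue (f : Ξ → Ξ → ℝ) (T a : Ξ) :
    Summable fun n => hitValue lam f T n a := by
  obtain ⟨C, β, hC0, hβ0, hβ1, hC⟩ := exists_killedMatrix_pow_le_geometric hnn hsymm T
  have : Nonempty Ξ := ⟨T⟩
  obtain ⟨⟨b₀, c₀⟩, hM⟩ := Finite.exists_max fun p : Ξ × Ξ => |f p.1 p.2|
  refine .of_norm_bounded (((summable_pow_mul_geometric_of_norm_lt_one 1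
    (by rwa [Real.norm_of_nonneg hβ0])).mul_left (|f b₀ c₀| * C))) fun n => ?_
  calc ‖hitValue lam f T n a‖ ≤ n * |f b₀ c₀| * (killedMatrix lam T ^ n) a T :=
        abs_hitValue_le hnn (fun b c => hM (b, c)) T n a
    _ ≤ n * |f b₀ c₀| * (C * β ^ n) := by gcongr; exact hC n a
    _ = |f b₀ c₀| * C * ((n : ℝ) ^ 1 * β ^ n) := by ring

theorem tsum_killedMatrix_pow_eq (T a : Ξ) :
    ∑' n, (killedMatrix lam T ^ n) a T
      = (if a = T then 1 else 0)
        + ∑ c, killedMatrix lam T a c * ∑' n, (killedMatrix lam T ^ n) c T := by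
  rw [(summable_killedMatrix_pow hsymm hnn T a).tsum_eq_zero_add, pow_zero, Matrix.one_apply]
  simp only [killedMatrix_pow_succ_apply]
  rw [Summable.tsum_finsetSum fun c _ => (summable_killedMatrix_pow hsymm hnn T c).mul_left _]
  simp only [tsum_mul_left]

theorem pathValue_eq_sum (f : Ξ → Ξ → ℝ) (a T : Ξ) :
    pathValue lam f a T = ∑ c, killedMatrix lam T a c *
      (f a c * ∑' n, (killedMatrix lam T ^ n) c T + pathValue lam f c T) := by
  rw [pathValue_eq_tsum_hitValue, (summable_hitValue hsymm hnn f T a).tsum_eq_zero_add,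
    hitValue_zero, zero_add]
  simp only [hitValue_succ]
  rw [Summable.tsum_finsetSum fun c _ => (((summable_killedMatrix_pow hsymm hnn T c).mul_left _).add
    (summable_hitValue hsymm hnn f T c)).mul_left _]
  refine sum_congr rfl fun c _ => ?_
  rw [tsum_mul_left, Summable.tsum_add ((summable_killedMatrix_pow hsymm hnn T c).mul_left _)
    (summable_hitValue hsymm hnn f T c), tsum_mul_left, pathValue_eq_tsum_hitValue]

/-- The hitting probability is harmonic off `T` and equals `1` at `T`. -/
theorem tsum_killedMatrix_pow_eq_one {a T : Ξ} (ha : Reaches lam a T) :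
    ∑' n, (killedMatrix lam T ^ n) a T = 1 := by
  set h := fun a => ∑' n, (killedMatrix lam T ^ n) a T
  suffices h a - 1 = 0 by linarith
  refine eq_zero_of_dstar_grad_eq_zero hsymm hnn (w := fun a => h a - 1) ?_ (fun b hb hbT => ?_) ha
  · simp [h, tsum_killedMatrix_pow_eq hsymm hnn T T, killedMatrix_apply]
  have hgrad : grad (fun a => h a - 1) = grad h + 0 := by ext; simp [grad]
  rw [hgrad]
  refine dstar_grad_add_eq_zero hsymm (fun _ _ => neg_zero.symm)
    (sum_lam_pos_of_reaches hnn hb hbT).ne' ?_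
  simp [h, tsum_killedMatrix_pow_eq hsymm hnn T b, killedMatrix_apply, hbT]

theorem dstar_grad_pathValue_add_eq_zero {f : Ξ → Ξ → ℝ} (hf : ∀ a b, f b a = -f a b)
    {a T : Ξ} (ha : Reaches lam a T) (haT : a ≠ T) :
    dstar lam (grad (pathValue lam f · T) + f) a = 0 := by
  refine dstar_grad_add_eq_zero hsymm hf (sum_lam_pos_of_reaches hnn ha haT).ne' ?_
  rw [pathValue_eq_sum hsymm hnn]
  refine sum_congr rfl fun c _ => ?_
  rw [killedMatrix_apply, if_neg haT]
  rcases (hnn a c).eq_or_lt with hac | hac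
  · rw [transProb, ← hac, zero_div, zero_mul, zero_mul]
  · rw [tsum_killedMatrix_pow_eq_one hsymm hnn (.head (hsymm a c ▸ hac) ha), mul_one, add_comm]

theorem dstar_grad_pathValue_add_eq_zero_of_reaches {f : Ξ → Ξ → ℝ}
    (hf : ∀ a b, f b a = -f a b) {a S : Ξ} (ha : Reaches lam S a) :
    dstar lam (grad (pathValue lam f · S) + f) a = 0 := by
  have hoff : ∀ b, Reaches lam S b → b ≠ S →
      dstar lam (grad (pathValue lam f · S) + f) b = 0 :=
    fun b hb hbS => dstar_grad_pathValue_add_eq_zero hsymm hnn hf (hb.symm hsymm) hbS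
  obtain rfl | haS := eq_or_ne a S
  · exact dstar_eq_zero_of_forall_ne hsymm hnn (fun b c => by simp [grad, hf b c]; ring) hoff
  · exact hoff a ha haS

/-- Both `a ↦ V_f^a(T)` and `a ↦ V_f^a(S) - V_f^T(S)` vanish at `T` and solve the same
Poisson equation off `T`, so they agree on the component. -/
theorem pathValue_antisymm {f : Ξ → Ξ → ℝ} (hf : ∀ a b, f b a = -f a b) {S T : Ξ}
    (hT : Reaches lam S T) : pathValue lam f S T = -pathValue lam f T S := by
  set u := (pathValue lam f · S)
  set v := (pathValue lam f · T)
  suffices h : v S - (u S - u T) = 0 by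
    simp only [u, v, pathValue_self] at h
    linarith
  refine eq_zero_of_dstar_grad_eq_zero hsymm hnn (T := T) (w := fun a => v a - (u a - u T))
    (by simp [v, pathValue_self]) (fun a ha haT => ?_) hT
  have hgrad : grad (fun a => v a - (u a - u T)) = (grad v + f) - (grad u + f) := by
    ext; simp [grad]; ring
  rw [hgrad, dstar_sub, dstar_grad_pathValue_add_eq_zero hsymm hnn hf ha haT,
    dstar_grad_pathValue_add_eq_zero_of_reaches hsymm hnn hf (hT.trans (ha.symm hsymm)), sub_zero]

end Value

end CanonicalChain

open CanonicalChain

theorem stmt_12_general [Fintype Ξ] [DecidableEq Ξ]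
    (lam : Ξ → Ξ → ℝ) (hsymm : ∀ a b, lam a b = lam b a)
    (hnonneg : ∀ a b, 0 ≤ lam a b)
    (f : Ξ → Ξ → ℝ) (hf : ∀ a b, f b a = -f a b)
    (S : Ξ) :
    ∀ S' : Ξ, Relation.ReflTransGen (fun x y => 0 < lam x y) S S' →
      ∑ T : Ξ, lam T S' * (pathValue lam f S S' - pathValue lam f S T)
        = ∑ T : Ξ, lam T S' * f T S' := by
  intro S' (hS' : Reaches lam S S')
  have hpoisson := dstar_grad_pathValue_add_eq_zero_of_reaches hsymm hnonneg hf hS'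
  have hterm : ∀ T, lam T S' * (pathValue lam f S S' - pathValue lam f S T)
      = lam T S' * f T S' - lam T S' * (grad (pathValue lam f · S) + f) T S' := fun T => by
    by_cases hT : lam T S' = 0
    · simp [hT]
    rw [pathValue_antisymm hsymm hnonneg hf hS',
      pathValue_antisymm hsymm hnonneg hf (hS'.of_lam_ne_zero hsymm hnonneg hT)]
    simp only [grad, Pi.add_apply]
    ring
  rw [sum_congr rfl fun T _ => hterm T, sum_sub_distrib]
  exact sub_eq_self.2 hpoisson

/-- The path-integral value function solves the discrete Poisson equation: for the
canonical Markov chain on a weighted graph `(G, λ)` and any antisymmetric edge flow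
`f`, the function `T ↦ V_f^S(T)` satisfies `d*d V_f^S = d* f` on the connected
component containing `S`. -/
theorem stmt_12 [Fintype Ξ] [DecidableEq Ξ]
    (lam : Ξ → Ξ → ℝ) (hsymm : ∀ a b, lam a b = lam b a)
    (hnonneg : ∀ a b, 0 ≤ lam a b) (hirrefl : ∀ a, lam a a = 0)
    (f : Ξ → Ξ → ℝ) (hf : ∀ a b, f b a = -f a b)
    (S : Ξ) :
    ∀ S' : Ξ, Relation.ReflTransGen (fun x y => 0 < lam x y) S S' →
      ∑ T : Ξ, lam T S' * (pathValue lam f S S' - pathValue lam f S T)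
        = ∑ T : Ξ, lam T S' * f T S' :=
  stmt_12_general lam hsymm hnonneg f hf S
end

section
/- Given an antisymmetric set function δ : 2^{[N]} → ℝ (i.e., δ(S) = −δ([N]\S)), the average over all N! orderings of δ evaluated at the sets S̄^R_i = {j : j precedes i in R} ∪ {i} equals the Shapley value of the translated game v(S) := (δ(S) + δ([N]))/2: that is, (1/N!) Σ_R δ(S̄^R_i) = (1/N!) Σ_R [ v(S̄^R_i) − v(S^R_i) ] for each player i. -/
open Finset

/-- The set of players preceding `i` in the ordering given by a permutation `σ`. -/
def preds {N : ℕ} (σ : Equiv.Perm (Fin N)) (i : Fin N) : Finset (Fin N) :=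
  Finset.univ.filter fun j => σ j < σ i

lemma preds_rev {N : ℕ} (σ : Equiv.Perm (Fin N)) (i : Fin N) :
    (preds σ i)ᶜ = insert i (preds (Fin.revPerm.trans σ.symm).symm i) := by
  ext j
  simp only [preds, Finset.mem_compl, Finset.mem_filter, Finset.mem_univ, true_and,
    Finset.mem_insert, not_lt, Equiv.symm_trans_apply, Equiv.symm_symm, Fin.revPerm_symm,
    Fin.revPerm_apply, Fin.rev_lt_rev]
  constructor
  · intro h
    rcases lt_or_eq_of_le h with h' | h'
    · exact Or.inr h'
    · exact Or.inl (σ.injective h'.symm)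
  · rintro (rfl | h)
    · exact le_refl _
    · exact h.le

/-- For an antisymmetric set function `δ` (`δ(S) = −δ([N]\S)`), the average over
all orderings of `δ(S̄^R_i)` equals the averaged marginal contributions of the
translated game `v(S) = (δ(S) + δ([N]))/2`. -/
theorem stmt_16 {N : ℕ}
    (δ : Finset (Fin N) → ℝ) (hδ : ∀ S, δ S = -δ Sᶜ)
    (v : Finset (Fin N) → ℝ)
    (hv : ∀ S, v S = (δ S + δ Finset.univ) / 2) :
    ∀ i : Fin N,
      ((N.factorial : ℝ))⁻¹ * ∑ σ : Equiv.Perm (Fin N), δ (insert i (preds σ i))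
        = ((N.factorial : ℝ))⁻¹ * ∑ σ : Equiv.Perm (Fin N),
            (v (insert i (preds σ i)) - v (preds σ i)) := by
  intro i
  have key : ∑ σ : Equiv.Perm (Fin N), δ (preds σ i)
      = -∑ σ : Equiv.Perm (Fin N), δ (insert i (preds σ i)) := by
    have h1 : ∀ σ : Equiv.Perm (Fin N),
        δ (preds σ i) = -δ (insert i (preds (Fin.revPerm.trans σ.symm).symm i)) := by
      intro σ; rw [hδ, preds_rev]
    rw [Finset.sum_congr rfl (fun σ _ => h1 σ), Finset.sum_neg_distrib]
    congr 1
    exact Fintype.sum_bijective (fun σ : Equiv.Perm (Fin N) => (Fin.revPerm.trans σ.symm).symm)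
      (Equiv.bijective ⟨fun σ => (Fin.revPerm.trans σ.symm).symm,
        fun σ => (Fin.revPerm.trans σ.symm).symm, by intro σ; simp [Equiv.ext_iff],
        by intro σ; simp [Equiv.ext_iff]⟩) _ _ (fun σ => rfl)
  have hvd : ∀ σ : Equiv.Perm (Fin N),
      v (insert i (preds σ i)) - v (preds σ i)
        = (δ (insert i (preds σ i)) - δ (preds σ i)) / 2 := by
    intro σ; rw [hv, hv]; ring
  rw [Finset.sum_congr rfl (fun σ _ => hvd σ), ← Finset.sum_div, Finset.sum_sub_distrib, key]
  ring
end
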